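/- arXiv:0712.0592 — 6 statements merged into one kernel-verified Lean document; each statement's English description precedes it below -/
import Mathlib

section
/- Let y : [0,Δu] → ℝ be a piecewise C¹ curve with y(0) = 1 and y(Δu) = √(1+Δu), and let p(u) = 1/(4(1+u)²). Then ∫₀^{Δu} (ẏ(u)² − p(u)·y(u)²) du ≥ 0, with equality for y(u) = √(1+u). Hence the infimum of the functional over all such curves equals 0. -/
/-!
The Jacobi field `y₀ = √(1+u)` is positive, so `w = y₀'/y₀ = 1/(2(1+u))` solves the Riccati
equation `w' + w² + p = 0` with `p = 1/(4(1+u)²)`. This turns the integrand into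
`(ẏ - w y)² + (w y²)'` (Legendre's transformation), and the boundary term `w y²` equals `1/2`
at both ends.
-/

open MeasureTheory Real Set Filter Topology

namespace AbsolutelyContinuousOnInterval

variable {a b : ℝ} {y y' w w' p : ℝ → ℝ}

theorem congr {f g : ℝ → ℝ} (hf : AbsolutelyContinuousOnInterval f a b)
    (hfg : EqOn f g (uIcc a b)) : AbsolutelyContinuousOnInterval g a b := by
  refine hf.congr' (eventually_inf_principal.mpr (Eventually.of_forall fun E hE => ?_))
  refine Finset.sum_congr rfl fun i hi => ?_
  rw [hfg (hE.1 i hi).1, hfg (hE.1 i hi).2]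

theorem intervalIntegrable_of_ae_hasDerivAt (hy : AbsolutelyContinuousOnInterval y a b)
    (hy' : ∀ᵐ x, x ∈ uIcc a b → HasDerivAt y (y' x) x) :
    IntervalIntegrable y' volume a b := by
  refine hy.intervalIntegrable_deriv.congr_ae ?_
  rw [EventuallyEq, ae_restrict_iff' measurableSet_uIoc]
  filter_upwards [hy'] with x hx hxI using (hx (uIoc_subset_uIcc hxI)).deriv

theorem integral_sq_deriv_sub_mul_sq (hy : AbsolutelyContinuousOnInterval y a b)
    (hy' : ∀ᵐ x, x ∈ uIcc a b → HasDerivAt y (y' x) x)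
    (hy'sq : IntervalIntegrable (fun x => y' x ^ 2) volume a b)
    (hw : AbsolutelyContinuousOnInterval w a b)
    (hw' : ∀ᵐ x, x ∈ uIcc a b → HasDerivAt w (w' x) x)
    (hric : ∀ᵐ x, x ∈ uIcc a b → w' x + w x ^ 2 + p x = 0) :
    ∫ x in a..b, (y' x ^ 2 - p x * y x ^ 2)
      = (∫ x in a..b, (y' x - w x * y x) ^ 2) + (w b * y b ^ 2 - w a * y a ^ 2) := by
  have hF : AbsolutelyContinuousOnInterval (fun x => w x * y x ^ 2) a b := by
    simpa only [sq] using hw.fun_mul (hy.fun_mul hy)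
  have hwy : ContinuousOn (fun x => w x * y x) (uIcc a b) := hw.continuousOn.mul hy.continuousOn
  have hsq : IntervalIntegrable (fun x => (y' x - w x * y x) ^ 2) volume a b := by
    have := (hy'sq.sub (((intervalIntegrable_of_ae_hasDerivAt hy hy').mul_continuousOn
      hwy).const_mul 2)).add (hwy.pow 2).intervalIntegrable
    convert this using 2 with x
    simp only [Pi.pow_apply]
    ring
  rw [← hF.integral_deriv_eq_sub,
    ← intervalIntegral.integral_add hsq hF.intervalIntegrable_deriv]
  refine intervalIntegral.integral_congr_ae ?_
  filter_upwards [hy', hw', hric] with x hyx hwx hricx hxI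
  have hxI := uIoc_subset_uIcc hxI
  rw [((hwx hxI).fun_mul ((hyx hxI).fun_pow 2)).deriv]
  linear_combination (-(y x ^ 2)) * hricx hxI

theorem integral_sq_deriv_sub_mul_sq_nonneg (hab : a ≤ b)
    (hy : AbsolutelyContinuousOnInterval y a b)
    (hy' : ∀ᵐ x, x ∈ uIcc a b → HasDerivAt y (y' x) x)
    (hy'sq : IntervalIntegrable (fun x => y' x ^ 2) volume a b)
    (hw : AbsolutelyContinuousOnInterval w a b)
    (hw' : ∀ᵐ x, x ∈ uIcc a b → HasDerivAt w (w' x) x)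
    (hric : ∀ᵐ x, x ∈ uIcc a b → w' x + w x ^ 2 + p x = 0)
    (hbdry : w a * y a ^ 2 ≤ w b * y b ^ 2) :
    0 ≤ ∫ x in a..b, (y' x ^ 2 - p x * y x ^ 2) := by
  rw [hy.integral_sq_deriv_sub_mul_sq hy' hy'sq hw hw' hric]
  have := intervalIntegral.integral_nonneg (μ := volume) hab
    fun x _ => sq_nonneg (y' x - w x * y x)
  linarith

end AbsolutelyContinuousOnInterval

section Primitive

variable {a b : ℝ} {y y' : ℝ → ℝ}

theorem absolutelyContinuousOnInterval_of_eq_add_integral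
    (hy'int : IntervalIntegrable y' volume a b)
    (hy : ∀ x ∈ uIcc a b, y x = y a + ∫ t in a..x, y' t) :
    AbsolutelyContinuousOnInterval y a b :=
  ((LipschitzWith.const (y a)).lipschitzOnWith.absolutelyContinuousOnInterval.fun_add
    (hy'int.absolutelyContinuousOnInterval_intervalIntegral left_mem_uIcc)).congr
    fun x hx => (hy x hx).symm

theorem ae_hasDerivAt_of_eq_add_integral
    (hy'int : IntervalIntegrable y' volume a b)
    (hy : ∀ x ∈ uIcc a b, y x = y a + ∫ t in a..x, y' t) :
    ∀ᵐ x, x ∈ uIcc a b → HasDerivAt y (y' x) x := by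
  filter_upwards [hy'int.ae_hasDerivAt_integral, Measure.ae_ne volume a, Measure.ae_ne volume b]
    with x hx hxa hxb hxI
  have hnhds : uIcc a b ∈ 𝓝 x := by
    rw [uIcc] at hxI ⊢
    apply Icc_mem_nhds
    · rcases min_choice a b with h | h <;> rw [h] at hxI ⊢ <;> grind
    · rcases max_choice a b with h | h <;> rw [h] at hxI ⊢ <;> grind
  exact ((hx hxI a left_mem_uIcc).const_add (y a)).congr_of_eventuallyEq
    (eventually_of_mem hnhds hy)

end Primitive

theorem hasDerivAt_inv_two_mul_one_add {u : ℝ} (hu : 1 + u ≠ 0) :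
    HasDerivAt (fun u : ℝ => (2 * (1 + u))⁻¹) (-2 * (2 * (1 + u))⁻¹ ^ 2) u := by
  refine ((((hasDerivAt_id u).const_add 1).const_mul 2).inv (by simpa using hu)).congr_deriv ?_
  simp only [id, mul_one, inv_pow, div_eq_mul_inv]

/-- For any piecewise-C¹ (absolutely continuous with integrable
derivative) curve `y : [0,Δu] → ℝ` with `y 0 = 1`, `y Δu = √(1+Δu)`, the
functional `∫₀^{Δu} (ẏ² − y²/(4(1+u)²))` is nonnegative, and it vanishes for
`y₀(u) = √(1+u)` (so the infimum of the functional over such curves is 0). -/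
theorem stmt_0 (Δu : ℝ) (hΔu : 0 < Δu)
    (y y' : ℝ → ℝ)
    (hy : ∀ t ∈ Set.Icc (0:ℝ) Δu, y t = y 0 + ∫ s in (0:ℝ)..t, y' s)
    (hy'int : IntervalIntegrable y' volume 0 Δu)
    (hy'sq : IntervalIntegrable (fun s => (y' s)^2) volume 0 Δu)
    (h0 : y 0 = 1) (h1 : y Δu = Real.sqrt (1 + Δu)) :
    (0 ≤ ∫ u in (0:ℝ)..Δu, ((y' u)^2 - (y u)^2 / (4 * (1 + u)^2))) ∧
    (∫ u in (0:ℝ)..Δu,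
        ((1 / (2 * Real.sqrt (1 + u)))^2
          - (Real.sqrt (1 + u))^2 / (4 * (1 + u)^2)) = 0) := by
  have hIcc : uIcc 0 Δu = Icc 0 Δu := uIcc_of_le hΔu.le
  have hpos : ∀ u ∈ uIcc 0 Δu, 0 < 1 + u := fun u hu => by rw [hIcc] at hu; linarith [hu.1]
  rw [← hIcc] at hy
  set w : ℝ → ℝ := fun u => (2 * (1 + u))⁻¹ with hw
  constructor
  · have hwAC : AbsolutelyContinuousOnInterval w 0 Δu := by
      refine ContDiffOn.absolutelyContinuousOnInterval ?_
      exact (contDiffOn_const.mul (contDiffOn_const.add contDiffOn_id)).inv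
        fun u hu => by have := hpos u hu; positivity
    have hw' : ∀ᵐ u, u ∈ uIcc 0 Δu → HasDerivAt w (-2 * w u ^ 2) u :=
      Eventually.of_forall fun u hu => hasDerivAt_inv_two_mul_one_add (hpos u hu).ne'
    have hbdry : w 0 * y 0 ^ 2 ≤ w Δu * y Δu ^ 2 := by
      have := hpos Δu right_mem_uIcc
      rw [h0, h1, sq_sqrt this.le, hw]
      field_simp
      norm_num
    have hyAC := absolutelyContinuousOnInterval_of_eq_add_integral hy'int hy
    convert hyAC.integral_sq_deriv_sub_mul_sq_nonneg (p := fun u => w u ^ 2) hΔu.le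
      (ae_hasDerivAt_of_eq_add_integral hy'int hy) hy'sq hwAC hw'
      (Eventually.of_forall fun u _ => by ring) hbdry using 3 with u
    rw [hw, inv_pow, mul_pow]
    ring
  · refine (intervalIntegral.integral_congr fun u hu => ?_).trans intervalIntegral.integral_zero
    have := hpos u hu
    rw [div_pow, mul_pow, sq_sqrt this.le]
    field_simp
    ring
end

section
/- Let y : [0,Δ] → ℝ be piecewise C¹ with y(0) = a and y(Δ) = b, and let y₀ : [0,Δ] → ℝ be a positive C² solution of ÿ₀ + p·y₀ = 0 with y₀(0) = a, y₀(Δ) = b, where p : [0,Δ] → ℝ is continuous. Then ∫₀^Δ (ẏ² − p·y²) ≥ ∫₀^Δ (ẏ₀² − p·y₀²). (Key identity: with g = ẏ₀/y₀, one has ∫₀^Δ(ẏ² − p·y²) = ∫₀^Δ(ẏ − g·y)² + [y² g]₀^Δ.) -/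
open MeasureTheory Real

open Set intervalIntegral

lemma fubini_core (T : ℝ) (hT : 0 ≤ T) (f g : ℝ → ℝ)
    (hf : IntervalIntegrable f volume 0 T) (hg : IntervalIntegrable g volume 0 T) :
    (∫ s in (0:ℝ)..T, f s * ∫ r in (0:ℝ)..s, g r)
      + (∫ s in (0:ℝ)..T, (∫ r in (0:ℝ)..s, f r) * g s)
    = (∫ s in (0:ℝ)..T, f s) * ∫ s in (0:ℝ)..T, g s := by
  set μ : Measure ℝ := volume.restrict (Set.Ioc (0:ℝ) T) with hμ
  have hfμ : Integrable f μ := (intervalIntegrable_iff_integrableOn_Ioc_of_le hT).1 hf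
  have hgμ : Integrable g μ := (intervalIntegrable_iff_integrableOn_Ioc_of_le hT).1 hg
  have hF : Integrable (fun p : ℝ × ℝ => f p.1 * g p.2) (μ.prod μ) := hfμ.mul_prod hgμ
  have hTri : MeasurableSet {p : ℝ × ℝ | p.2 ≤ p.1} :=
    measurableSet_le measurable_snd measurable_fst
  have hF1 : Integrable ({p : ℝ × ℝ | p.2 ≤ p.1}.indicator
      (fun p : ℝ × ℝ => f p.1 * g p.2)) (μ.prod μ) := hF.indicator hTri
  have hF2 : Integrable ({p : ℝ × ℝ | p.2 ≤ p.1}ᶜ.indicator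
      (fun p : ℝ × ℝ => f p.1 * g p.2)) (μ.prod μ) := hF.indicator hTri.compl
  -- total integral
  have htot : (∫ q, ({p : ℝ × ℝ | p.2 ≤ p.1}.indicator
        (fun p : ℝ × ℝ => f p.1 * g p.2)) q ∂(μ.prod μ))
      + (∫ q, ({p : ℝ × ℝ | p.2 ≤ p.1}ᶜ.indicator
        (fun p : ℝ × ℝ => f p.1 * g p.2)) q ∂(μ.prod μ))
      = (∫ s, f s ∂μ) * ∫ s, g s ∂μ := by
    rw [← integral_add hF1 hF2]
    rw [← MeasureTheory.integral_prod_mul f g]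
    congr 1
    funext q
    by_cases h : q.2 ≤ q.1 <;> simp [Set.indicator_apply, h]
  -- first piece
  have hI1 : (∫ q, ({p : ℝ × ℝ | p.2 ≤ p.1}.indicator
        (fun p : ℝ × ℝ => f p.1 * g p.2)) q ∂(μ.prod μ))
      = ∫ s, (f s * ∫ r in (0:ℝ)..s, g r) ∂μ := by
    rw [MeasureTheory.integral_prod _ hF1]
    refine integral_congr_ae ?_
    filter_upwards [ae_restrict_mem measurableSet_Ioc] with s hs
    have h1 : (fun r => ({p : ℝ × ℝ | p.2 ≤ p.1}.indicator
        (fun p : ℝ × ℝ => f p.1 * g p.2)) (s, r))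
        = fun r => f s * (Set.Iic s).indicator g r := by
      funext r
      by_cases h : r ≤ s <;> simp [Set.indicator_apply, h]
    rw [h1, MeasureTheory.integral_const_mul, MeasureTheory.integral_indicator measurableSet_Iic]
    congr 1
    rw [Measure.restrict_restrict measurableSet_Iic]
    have h2 : Set.Iic s ∩ Set.Ioc 0 T = Set.Ioc 0 s := by
      ext x
      simp only [Set.mem_inter_iff, Set.mem_Iic, Set.mem_Ioc]
      exact ⟨fun ⟨h1, h2, _⟩ => ⟨h2, h1⟩, fun ⟨h1, h2⟩ => ⟨h2, h1, h2.trans hs.2⟩⟩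
    rw [h2, intervalIntegral.integral_of_le hs.1.le]
  -- second piece
  have hI2 : (∫ q, ({p : ℝ × ℝ | p.2 ≤ p.1}ᶜ.indicator
        (fun p : ℝ × ℝ => f p.1 * g p.2)) q ∂(μ.prod μ))
      = ∫ r, ((∫ s in (0:ℝ)..r, f s) * g r) ∂μ := by
    rw [MeasureTheory.integral_prod _ hF2]
    rw [MeasureTheory.integral_integral_swap (by exact hF2)]
    refine integral_congr_ae ?_
    filter_upwards [ae_restrict_mem measurableSet_Ioc] with r hr
    have h1 : (fun s => ({p : ℝ × ℝ | p.2 ≤ p.1}ᶜ.indicator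
        (fun p : ℝ × ℝ => f p.1 * g p.2)) (s, r))
        = fun s => ((Set.Iio r).indicator f s) * g r := by
      funext s
      by_cases h : r ≤ s
      · simp [Set.indicator_apply, h, not_lt.2 h]
      · simp [Set.indicator_apply, h, not_le.1 h]
    rw [h1, MeasureTheory.integral_mul_const, MeasureTheory.integral_indicator measurableSet_Iio]
    congr 1
    rw [Measure.restrict_restrict measurableSet_Iio]
    have h2 : Set.Iio r ∩ Set.Ioc 0 T = Set.Ioo 0 r := by
      ext x
      simp only [Set.mem_inter_iff, Set.mem_Iio, Set.mem_Ioc, Set.mem_Ioo]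
      exact ⟨fun ⟨h1, h2, _⟩ => ⟨h2, h1⟩, fun ⟨h1, h2⟩ => ⟨h2, h1, (le_of_lt h2).trans hr.2⟩⟩
    rw [h2, intervalIntegral.integral_of_le hr.1.le, ← MeasureTheory.integral_Ioc_eq_integral_Ioo]
  simp only [intervalIntegral.integral_of_le hT]
  rw [← hμ, ← hI1, ← hI2, htot]

/-- Product rule / integration by parts for absolutely continuous functions. -/
lemma ibp_ac (T : ℝ) (hT : 0 ≤ T) (u w u' w' : ℝ → ℝ)
    (hu : ∀ t ∈ Set.Icc (0:ℝ) T, u t = u 0 + ∫ s in (0:ℝ)..t, u' s)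
    (hw : ∀ t ∈ Set.Icc (0:ℝ) T, w t = w 0 + ∫ s in (0:ℝ)..t, w' s)
    (hu' : IntervalIntegrable u' volume 0 T) (hw' : IntervalIntegrable w' volume 0 T) :
    (∫ s in (0:ℝ)..T, (u' s * w s + u s * w' s)) = u T * w T - u 0 * w 0 := by
  have hIcc : Set.uIcc (0:ℝ) T = Set.Icc 0 T := Set.uIcc_of_le hT
  set U : ℝ → ℝ := fun t => ∫ s in (0:ℝ)..t, u' s with hU
  set W : ℝ → ℝ := fun t => ∫ s in (0:ℝ)..t, w' s with hW
  have hUc : ContinuousOn U (Set.uIcc 0 T) :=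
    intervalIntegral.continuousOn_primitive_interval' hu' Set.left_mem_uIcc
  have hWc : ContinuousOn W (Set.uIcc 0 T) :=
    intervalIntegral.continuousOn_primitive_interval' hw' Set.left_mem_uIcc
  have iu'W : IntervalIntegrable (fun s => u' s * (w 0 + W s)) volume 0 T :=
    hu'.mul_continuousOn (continuousOn_const.add hWc)
  have iUw' : IntervalIntegrable (fun s => (u 0 + U s) * w' s) volume 0 T :=
    hw'.continuousOn_mul (continuousOn_const.add hUc)
  have step1 : (∫ s in (0:ℝ)..T, (u' s * w s + u s * w' s))
      = (∫ s in (0:ℝ)..T, (u' s * (w 0 + W s) + (u 0 + U s) * w' s)) := by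
    apply intervalIntegral.integral_congr
    intro s hs
    rw [hIcc] at hs
    dsimp only
    rw [hu s hs, hw s hs]
  have step2 : (∫ s in (0:ℝ)..T, (u' s * (w 0 + W s) + (u 0 + U s) * w' s))
      = (∫ s in (0:ℝ)..T, u' s * (w 0 + W s)) + ∫ s in (0:ℝ)..T, (u 0 + U s) * w' s :=
    intervalIntegral.integral_add iu'W iUw'
  have iu'Wmul : IntervalIntegrable (fun s => u' s * W s) volume 0 T :=
    hu'.mul_continuousOn hWc
  have iUw'mul : IntervalIntegrable (fun s => U s * w' s) volume 0 T :=
    hw'.continuousOn_mul hUc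
  have step3 : (∫ s in (0:ℝ)..T, u' s * (w 0 + W s))
      = w 0 * U T + ∫ s in (0:ℝ)..T, u' s * W s := by
    have : (fun s => u' s * (w 0 + W s)) = fun s => w 0 * u' s + u' s * W s := by
      funext s; ring
    rw [this, intervalIntegral.integral_add (hu'.const_mul _) iu'Wmul,
      intervalIntegral.integral_const_mul]
  have step4 : (∫ s in (0:ℝ)..T, (u 0 + U s) * w' s)
      = u 0 * W T + ∫ s in (0:ℝ)..T, U s * w' s := by
    have : (fun s => (u 0 + U s) * w' s) = fun s => u 0 * w' s + U s * w' s := by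
      funext s; ring
    rw [this, intervalIntegral.integral_add (hw'.const_mul _) iUw'mul,
      intervalIntegral.integral_const_mul]
  have hut : u T = u 0 + U T := hu T ⟨hT, le_rfl⟩
  have hwt : w T = w 0 + W T := hw T ⟨hT, le_rfl⟩
  have key : (∫ s in (0:ℝ)..T, u' s * W s) + (∫ s in (0:ℝ)..T, U s * w' s) = U T * W T :=
    fubini_core T hT u' w' hu' hw'
  rw [step1, step2, step3, step4, hut, hwt]
  linear_combination key

/-- Sturm–Liouville comparison: if `y₀` is a positive C² solution
of `ÿ₀ + p y₀ = 0` on `[0,Δ]` with the same boundary values as the absolutely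
continuous curve `y`, then `∫ (ẏ² − p y²) ≥ ∫ (ẏ₀² − p y₀²)`. -/
theorem stmt_1 (Δ a b : ℝ) (hΔ : 0 < Δ)
    (p : ℝ → ℝ) (hp : ContinuousOn p (Set.Icc 0 Δ))
    (y y' : ℝ → ℝ)
    (hy : ∀ t ∈ Set.Icc (0:ℝ) Δ, y t = y 0 + ∫ s in (0:ℝ)..t, y' s)
    (hy'int : IntervalIntegrable y' volume 0 Δ)
    (hy'sq : IntervalIntegrable (fun s => (y' s)^2) volume 0 Δ)
    (hya : y 0 = a) (hyb : y Δ = b)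
    (y₀ y₀' y₀'' : ℝ → ℝ)
    (hy₀d : ∀ t ∈ Set.Icc (0:ℝ) Δ, HasDerivAt y₀ (y₀' t) t)
    (hy₀d' : ∀ t ∈ Set.Icc (0:ℝ) Δ, HasDerivAt y₀' (y₀'' t) t)
    (hy₀''c : ContinuousOn y₀'' (Set.Icc 0 Δ))
    (hy₀pos : ∀ t ∈ Set.Icc (0:ℝ) Δ, 0 < y₀ t)
    (hODE : ∀ t ∈ Set.Icc (0:ℝ) Δ, y₀'' t + p t * y₀ t = 0)
    (hy₀a : y₀ 0 = a) (hy₀b : y₀ Δ = b) :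
    (∫ s in (0:ℝ)..Δ, ((y₀' s)^2 - p s * (y₀ s)^2))
      ≤ ∫ s in (0:ℝ)..Δ, ((y' s)^2 - p s * (y s)^2) := by
  have hT : (0:ℝ) ≤ Δ := hΔ.le
  have hIcc : Set.uIcc (0:ℝ) Δ = Set.Icc 0 Δ := Set.uIcc_of_le hT
  have hsub : ∀ t ∈ Set.Icc (0:ℝ) Δ, Set.uIcc (0:ℝ) t ⊆ Set.Icc 0 Δ := by
    intro t ht
    rw [Set.uIcc_of_le ht.1]
    exact Set.Icc_subset_Icc le_rfl ht.2
  have II : ∀ {f : ℝ → ℝ}, ContinuousOn f (Set.Icc 0 Δ) → IntervalIntegrable f volume 0 Δ := by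
    intro f hf
    rw [← hIcc] at hf
    exact hf.intervalIntegrable
  have hne : ∀ t ∈ Set.Icc (0:ℝ) Δ, y₀ t ≠ 0 := fun t ht => (hy₀pos t ht).ne'
  have hy₀c : ContinuousOn y₀ (Set.Icc 0 Δ) :=
    fun t ht => ((hy₀d t ht).continuousAt).continuousWithinAt
  have hy₀'c : ContinuousOn y₀' (Set.Icc 0 Δ) :=
    fun t ht => ((hy₀d' t ht).continuousAt).continuousWithinAt
  -- the Riccati function g = y₀'/y₀ and its derivative
  set G : ℝ → ℝ := fun t => y₀' t / y₀ t with hGdef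
  set G' : ℝ → ℝ := fun t => (y₀'' t * y₀ t - y₀' t * y₀' t) / (y₀ t) ^ 2 with hG'def
  have hgc : ContinuousOn G (Set.Icc 0 Δ) := hy₀'c.div hy₀c hne
  have hg'c : ContinuousOn G' (Set.Icc 0 Δ) :=
    ((hy₀''c.mul hy₀c).sub (hy₀'c.mul hy₀'c)).div (hy₀c.pow 2)
      (fun t ht => pow_ne_zero 2 (hne t ht))
  have hgd : ∀ t ∈ Set.Icc (0:ℝ) Δ, HasDerivAt G (G' t) t :=
    fun t ht => (hy₀d' t ht).div (hy₀d t ht) (hne t ht)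
  -- integral representations
  have hy₀rep : ∀ t ∈ Set.Icc (0:ℝ) Δ, y₀ t = y₀ 0 + ∫ s in (0:ℝ)..t, y₀' s := by
    intro t ht
    have h1 := intervalIntegral.integral_eq_sub_of_hasDerivAt
      (fun x hx => hy₀d x (hsub t ht hx)) ((hy₀'c.mono (hsub t ht)).intervalIntegrable)
    linarith [h1]
  have hy₀'rep : ∀ t ∈ Set.Icc (0:ℝ) Δ, y₀' t = y₀' 0 + ∫ s in (0:ℝ)..t, y₀'' s := by
    intro t ht
    have h1 := intervalIntegral.integral_eq_sub_of_hasDerivAt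
      (fun x hx => hy₀d' x (hsub t ht hx)) ((hy₀''c.mono (hsub t ht)).intervalIntegrable)
    linarith [h1]
  have hgrep : ∀ t ∈ Set.Icc (0:ℝ) Δ, G t = G 0 + ∫ s in (0:ℝ)..t, G' s := by
    intro t ht
    have h1 := intervalIntegral.integral_eq_sub_of_hasDerivAt
      (fun x hx => hgd x (hsub t ht hx)) ((hg'c.mono (hsub t ht)).intervalIntegrable)
    linarith [h1]
  have hyc : ContinuousOn y (Set.Icc 0 Δ) := by
    have hprim : ContinuousOn (fun t => y 0 + ∫ s in (0:ℝ)..t, y' s) (Set.Icc 0 Δ) := by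
      apply continuousOn_const.add
      rw [← hIcc]
      exact intervalIntegral.continuousOn_primitive_interval' hy'int Set.left_mem_uIcc
    exact hprim.congr hy
  -- the difference h = y - y₀
  set h : ℝ → ℝ := fun t => y t - y₀ t with hhdef
  set h' : ℝ → ℝ := fun t => y' t - y₀' t with hh'def
  have hhc : ContinuousOn h (Set.Icc 0 Δ) := hyc.sub hy₀c
  have ih' : IntervalIntegrable h' volume 0 Δ := hy'int.sub (II hy₀'c)
  have hrep : ∀ t ∈ Set.Icc (0:ℝ) Δ, h t = h 0 + ∫ s in (0:ℝ)..t, h' s := by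
    intro t ht
    have hmono : Set.uIcc (0:ℝ) t ⊆ Set.uIcc (0:ℝ) Δ := by rw [hIcc]; exact hsub t ht
    rw [hhdef, hh'def]
    dsimp only
    rw [intervalIntegral.integral_sub (hy'int.mono_set hmono)
      ((hy₀'c.mono (hsub t ht)).intervalIntegrable), hy t ht, hy₀rep t ht]
    ring
  have h00 : h 0 = 0 := by rw [hhdef]; dsimp only; rw [hya, hy₀a]; ring
  have hΔ0 : h Δ = 0 := by rw [hhdef]; dsimp only; rw [hyb, hy₀b]; ring
  -- representation of h²
  set usq : ℝ → ℝ := fun t => (h t) ^ 2 with husqdef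
  set usq' : ℝ → ℝ := fun s => h' s * h s + h s * h' s with husq'def
  have hsqrep : ∀ t ∈ Set.Icc (0:ℝ) Δ, usq t = usq 0 + ∫ s in (0:ℝ)..t, usq' s := by
    intro t ht
    have hsub' : ∀ r ∈ Set.Icc (0:ℝ) t, r ∈ Set.Icc (0:ℝ) Δ :=
      fun r hr => ⟨hr.1, hr.2.trans ht.2⟩
    have hmono : Set.uIcc (0:ℝ) t ⊆ Set.uIcc (0:ℝ) Δ := by rw [hIcc]; exact hsub t ht
    have hibp := ibp_ac t ht.1 h h h' h'
      (fun r hr => hrep r (hsub' r hr)) (fun r hr => hrep r (hsub' r hr))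
      (ih'.mono_set hmono) (ih'.mono_set hmono)
    rw [husqdef, husq'def]
    dsimp only
    rw [hibp]
    ring
  have iusq' : IntervalIntegrable usq' volume 0 Δ := by
    rw [husq'def]
    apply IntervalIntegrable.add
    · exact ih'.mul_continuousOn (by rw [hIcc]; exact hhc)
    · exact ih'.continuousOn_mul (by rw [hIcc]; exact hhc)
  -- the two vanishing integrals
  have hC : (∫ s in (0:ℝ)..Δ, (h' s * y₀' s + h s * y₀'' s)) = 0 := by
    rw [ibp_ac Δ hT h y₀' h' y₀'' hrep hy₀'rep ih' (II hy₀''c), h00, hΔ0]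
    ring
  have hD : (∫ s in (0:ℝ)..Δ, (usq' s * G s + usq s * G' s)) = 0 := by
    rw [ibp_ac Δ hT usq G usq' G' hsqrep hgrep iusq' (II hg'c)]
    have h1 : usq Δ = 0 := by rw [husqdef]; dsimp only; rw [hΔ0]; ring
    have h2 : usq 0 = 0 := by rw [husqdef]; dsimp only; rw [h00]; ring
    rw [h1, h2]
    ring
  -- pointwise decomposition
  have key : ∀ s ∈ Set.Icc (0:ℝ) Δ, (y' s)^2 - p s * (y s)^2
      = ((y₀' s)^2 - p s * (y₀ s)^2)
        + (y' s - (y₀' s + G s * h s))^2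
        + 2 * (h' s * y₀' s + h s * y₀'' s)
        + (usq' s * G s + usq s * G' s) := by
    intro s hs
    have hode := hODE s hs
    have hne' := hne s hs
    have e1 : y₀'' s = -(p s * y₀ s) := by linarith
    have e2 : G' s = -p s - (G s)^2 := by
      rw [hG'def, hGdef]
      dsimp only
      field_simp
      linear_combination y₀ s * hode
    rw [husq'def, husqdef, hhdef, hh'def]
    dsimp only
    rw [e1, e2]
    ring
  have hA : (∫ s in (0:ℝ)..Δ, ((y' s)^2 - p s * (y s)^2))
      = ∫ s in (0:ℝ)..Δ, (((y₀' s)^2 - p s * (y₀ s)^2)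
        + (y' s - (y₀' s + G s * h s))^2
        + 2 * (h' s * y₀' s + h s * y₀'' s)
        + (usq' s * G s + usq s * G' s)) := by
    apply intervalIntegral.integral_congr
    intro s hs
    rw [hIcc] at hs
    exact key s hs
  -- integrability of the pieces
  have iT1 : IntervalIntegrable (fun s => (y₀' s)^2 - p s * (y₀ s)^2) volume 0 Δ :=
    II ((hy₀'c.pow 2).sub (hp.mul (hy₀c.pow 2)))
  have hcc : ContinuousOn (fun s => y₀' s + G s * h s) (Set.Icc 0 Δ) :=
    hy₀'c.add (hgc.mul hhc)
  have iT2 : IntervalIntegrable (fun s => (y' s - (y₀' s + G s * h s))^2) volume 0 Δ := by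
    have heq : (fun s => (y' s - (y₀' s + G s * h s))^2)
        = fun s => ((y' s)^2 - 2 * (y' s * (y₀' s + G s * h s)))
          + (y₀' s + G s * h s) * (y₀' s + G s * h s) := by
      funext s; ring
    rw [heq]
    exact (hy'sq.sub ((hy'int.mul_continuousOn (by rw [hIcc]; exact hcc)).const_mul 2)).add
      (II (hcc.mul hcc))
  have iT3 : IntervalIntegrable (fun s => 2 * (h' s * y₀' s + h s * y₀'' s)) volume 0 Δ := by
    apply IntervalIntegrable.const_mul
    exact (ih'.mul_continuousOn (by rw [hIcc]; exact hy₀'c)).add (II (hhc.mul hy₀''c))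
  have iT4 : IntervalIntegrable (fun s => usq' s * G s + usq s * G' s) volume 0 Δ := by
    apply IntervalIntegrable.add
    · exact iusq'.mul_continuousOn (by rw [hIcc]; exact hgc)
    · apply II
      apply ContinuousOn.mul _ hg'c
      rw [husqdef]
      exact hhc.pow 2
  have hsplit : (∫ s in (0:ℝ)..Δ, (((y₀' s)^2 - p s * (y₀ s)^2)
        + (y' s - (y₀' s + G s * h s))^2
        + 2 * (h' s * y₀' s + h s * y₀'' s)
        + (usq' s * G s + usq s * G' s)))
      = (∫ s in (0:ℝ)..Δ, ((y₀' s)^2 - p s * (y₀ s)^2))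
        + (∫ s in (0:ℝ)..Δ, (y' s - (y₀' s + G s * h s))^2)
        + (∫ s in (0:ℝ)..Δ, 2 * (h' s * y₀' s + h s * y₀'' s))
        + (∫ s in (0:ℝ)..Δ, (usq' s * G s + usq s * G' s)) := by
    rw [intervalIntegral.integral_add ((iT1.add iT2).add iT3) iT4,
      intervalIntegral.integral_add (iT1.add iT2) iT3,
      intervalIntegral.integral_add iT1 iT2]
  have hT3 : (∫ s in (0:ℝ)..Δ, 2 * (h' s * y₀' s + h s * y₀'' s)) = 0 := by
    rw [intervalIntegral.integral_const_mul, hC]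
    ring
  have hpos : 0 ≤ ∫ s in (0:ℝ)..Δ, (y' s - (y₀' s + G s * h s))^2 :=
    intervalIntegral.integral_nonneg hT (fun s _ => sq_nonneg _)
  rw [hA, hsplit, hT3, hD]
  linarith
end

section
/- Let r : ℝ → ℝ be a C² function satisfying r̈(u) = f(u)·r(u) for all u, where f : ℝ → ℝ is continuous and strictly positive, with r(0) = 1 and ṙ(0) = 0. Then r(u) > 0 for all u, and the improper integrals ∫₀^∞ du/r(u)² and ∫_{−∞}^0 du/r(u)² are both finite. -/
/-!
Since `(r r')' = r'² + f r² ≥ 0` and `(r r')(0) = 0`, the function `r²` decreases on `(-∞, 0]`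
and increases on `[0, ∞)`, so `r² ≥ r(0)² = 1`; as `r` cannot change sign, `r ≥ 1`.
Then `r'' = f r > 0`, so `r'(1) > r'(0) = 0` and `r` lies above its tangent line at `1`, which
gives `r(u) ≥ c u` for `u ≥ 1` and makes `1/r²` integrable at `+∞`. The half-line `(-∞, 0]` is
handled by applying the same argument to `t ↦ r(-t)`.
-/

open MeasureTheory Set Filter

theorem integrableOn_Ioi_one_div_sq_of_mul_le {g : ℝ → ℝ} {a c : ℝ} (ha : 0 < a) (hc : 0 < c)
    (hg : ContinuousOn g (Ioi a)) (hle : ∀ u ∈ Ioi a, c * u ≤ g u) :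
    IntegrableOn (fun u => 1 / g u ^ 2) (Ioi a) := by
  have hcu : ∀ u ∈ Ioi a, 0 < c * u := fun u hu => mul_pos hc (ha.trans hu)
  refine ((integrableOn_Ioi_rpow_of_lt (by norm_num : (-2 : ℝ) < -1) ha).const_mul
    (c⁻¹ ^ 2)).mono' ?_ ?_
  · refine (continuousOn_const.div (hg.pow 2) fun u hu => ?_).aestronglyMeasurable
      measurableSet_Ioi
    exact pow_ne_zero 2 ((hcu u hu).trans_le (hle u hu)).ne'
  · filter_upwards [ae_restrict_mem measurableSet_Ioi] with u hu
    have hu0 : 0 < u := ha.trans hu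
    calc ‖1 / g u ^ 2‖ = 1 / g u ^ 2 := Real.norm_of_nonneg (by positivity)
      _ ≤ 1 / (c * u) ^ 2 :=
        one_div_le_one_div_of_le (pow_pos (hcu u hu) 2)
          (pow_le_pow_left₀ (hcu u hu).le (hle u hu) 2)
      _ = c⁻¹ ^ 2 * u ^ (-2 : ℝ) := by
        rw [Real.rpow_neg hu0.le, show (2 : ℝ) = (2 : ℕ) by norm_num, Real.rpow_natCast]
        field_simp

theorem integrableOn_Ici_one_div_sq_of_mul_le {g : ℝ → ℝ} {c : ℝ} (hg : Continuous g)
    (hg0 : ∀ u, g u ≠ 0) (hc : 0 < c) (hle : ∀ u ∈ Ioi 1, c * u ≤ g u) (a : ℝ) :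
    IntegrableOn (fun u => 1 / g u ^ 2) (Ici a) := by
  rw [integrableOn_Ici_iff_integrableAtFilter_atTop]
  refine ⟨⟨Ioi 1, Ioi_mem_atTop 1,
    integrableOn_Ioi_one_div_sq_of_mul_le one_pos hc hg.continuousOn hle⟩, ?_⟩
  exact (continuous_const.div (hg.pow 2) fun u => pow_ne_zero 2 (hg0 u)).locallyIntegrable
    |>.locallyIntegrableOn _

section SecondOrderODE

variable {f r r' : ℝ → ℝ}

theorem one_le_sq_of_hasDerivAt (hf : ∀ u, 0 ≤ f u) (hr : ∀ u, HasDerivAt r (r' u) u)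
    (hr' : ∀ u, HasDerivAt r' (f u * r u) u) (h0 : r 0 = 1) (h0' : r' 0 = 0) (u : ℝ) :
    1 ≤ r u ^ 2 := by
  have hmono : Monotone fun x => r x * r' x :=
    monotone_of_hasDerivAt_nonneg (fun x => (hr x).mul (hr' x)) fun x => by
      show 0 ≤ r' x * r' x + r x * (f x * r x)
      nlinarith [mul_self_nonneg (r' x), mul_nonneg (hf x) (mul_self_nonneg (r x))]
  have hrr'0 : r 0 * r' 0 = 0 := by rw [h0', mul_zero]
  have hsq : ∀ x, HasDerivAt (fun x => r x ^ 2) (2 * (r x * r' x)) x := fun x => by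
    simpa [mul_assoc] using (hr x).fun_pow 2
  have hsqc : Continuous fun x => r x ^ 2 :=
    continuous_iff_continuousAt.2 fun x => (hsq x).continuousAt
  rw [← one_pow 2, ← h0]
  rcases le_total 0 u with hu | hu
  · refine monotoneOn_of_hasDerivWithinAt_nonneg (convex_Ici 0) hsqc.continuousOn
      (fun x _ => (hsq x).hasDerivWithinAt) (fun x hx => ?_) self_mem_Ici hu hu
    rw [interior_Ici] at hx
    linarith [hmono (le_of_lt hx)]
  · refine antitoneOn_of_hasDerivWithinAt_nonpos (convex_Iic 0) hsqc.continuousOn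
      (fun x _ => (hsq x).hasDerivWithinAt) (fun x hx => ?_) hu self_mem_Iic hu
    rw [interior_Iic] at hx
    linarith [hmono (le_of_lt hx)]

theorem one_le_of_hasDerivAt (hf : ∀ u, 0 ≤ f u) (hr : ∀ u, HasDerivAt r (r' u) u)
    (hr' : ∀ u, HasDerivAt r' (f u * r u) u) (h0 : r 0 = 1) (h0' : r' 0 = 0) (u : ℝ) :
    1 ≤ r u := by
  have hsq := one_le_sq_of_hasDerivAt hf hr hr' h0 h0'
  have hpos : 0 < r u := by
    by_contra! hneg
    obtain ⟨v, hv⟩ := intermediate_value_univ u 0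
      (continuous_iff_continuousAt.2 fun x => (hr x).continuousAt) ⟨hneg, h0 ▸ zero_le_one⟩
    have := hsq v
    rw [hv] at this
    norm_num at this
  nlinarith [hsq u]

theorem exists_pos_mul_le_of_hasDerivAt (hf : ∀ u, 0 < f u) (hr : ∀ u, HasDerivAt r (r' u) u)
    (hr' : ∀ u, HasDerivAt r' (f u * r u) u) (h0 : r 0 = 1) (h0' : r' 0 = 0) :
    ∃ c > 0, ∀ u ∈ Ioi 1, c * u ≤ r u := by
  have hr1 := one_le_of_hasDerivAt (fun x => (hf x).le) hr hr' h0 h0'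
  have hr'mono : StrictMono r' :=
    strictMono_of_hasDerivAt_pos hr' fun x => mul_pos (hf x) (one_pos.trans_le (hr1 x))
  have hk : 0 < r' 1 := h0' ▸ hr'mono one_pos
  refine ⟨min (r' 1) 1, lt_min hk one_pos, fun u hu => ?_⟩
  have htangent : r' 1 * (u - 1) ≤ r u - r 1 :=
    (convex_Ici 1).mul_sub_le_image_sub_of_le_deriv
      (continuous_iff_continuousAt.2 fun x => (hr x).continuousAt).continuousOn
      (fun x _ => (hr x).differentiableAt.differentiableWithinAt)
      (fun x hx => by
        rw [interior_Ici] at hx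
        rw [(hr x).deriv]
        exact hr'mono.monotone (le_of_lt hx))
      1 self_mem_Ici u (mem_Ici.2 (le_of_lt hu)) (le_of_lt hu)
  nlinarith [min_le_right (r' 1) 1, hr1 1,
    mul_nonneg (sub_nonneg.2 (min_le_left (r' 1) 1)) (sub_nonneg.2 (le_of_lt (mem_Ioi.1 hu)))]

theorem integrableOn_Ici_one_div_sq_of_hasDerivAt (hf : ∀ u, 0 < f u)
    (hr : ∀ u, HasDerivAt r (r' u) u) (hr' : ∀ u, HasDerivAt r' (f u * r u) u) (h0 : r 0 = 1)
    (h0' : r' 0 = 0) : IntegrableOn (fun u => 1 / r u ^ 2) (Ici 0) := by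
  obtain ⟨c, hc, hle⟩ := exists_pos_mul_le_of_hasDerivAt hf hr hr' h0 h0'
  refine integrableOn_Ici_one_div_sq_of_mul_le
    (continuous_iff_continuousAt.2 fun x => (hr x).continuousAt) (fun u => ?_) hc hle 0
  exact (one_pos.trans_le (one_le_of_hasDerivAt (fun x => (hf x).le) hr hr' h0 h0' u)).ne'

end SecondOrderODE

theorem stmt_2_general (f r r' r'' : ℝ → ℝ)
    (hfpos : ∀ u, 0 < f u)
    (hrd : ∀ u, HasDerivAt r (r' u) u)
    (hrd' : ∀ u, HasDerivAt r' (r'' u) u)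
    (hODE : ∀ u, r'' u = f u * r u)
    (h0 : r 0 = 1) (h0' : r' 0 = 0) :
    (∀ u, 0 < r u) ∧
    IntegrableOn (fun u => 1 / (r u)^2) (Set.Ici 0) volume ∧
    IntegrableOn (fun u => 1 / (r u)^2) (Set.Iic 0) volume := by
  have hrd'' : ∀ u, HasDerivAt r' (f u * r u) u := fun u => hODE u ▸ hrd' u
  -- `t ↦ r (-t)` solves the same kind of equation, with coefficient `t ↦ f (-t)`
  have hneg : ∀ u, HasDerivAt (fun t => r (-t)) (-r' (-u)) u := fun u => by
    simpa [Function.comp_def] using (hrd (-u)).comp u (hasDerivAt_neg u)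
  have hneg' : ∀ u, HasDerivAt (fun t => -r' (-t)) (f (-u) * r (-u)) u := fun u => by
    simpa [Function.comp_def] using ((hrd'' (-u)).comp u (hasDerivAt_neg u)).fun_neg
  refine ⟨fun u => one_pos.trans_le
      (one_le_of_hasDerivAt (fun u => (hfpos u).le) hrd hrd'' h0 h0' u),
    integrableOn_Ici_one_div_sq_of_hasDerivAt hfpos hrd hrd'' h0 h0', ?_⟩
  rw [← (Measure.measurePreserving_neg (volume : Measure ℝ)).integrableOn_comp_preimage
    (Homeomorph.neg ℝ).measurableEmbedding]
  simpa only [Function.comp_def, neg_preimage, neg_Iic, neg_zero] using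
    integrableOn_Ici_one_div_sq_of_hasDerivAt (fun u => hfpos (-u)) hneg hneg'
      (by simpa using h0) (by simpa using h0')

/-- If `r̈ = f·r` with `f` continuous and strictly positive,
`r(0) = 1`, `ṙ(0) = 0`, then `r > 0` everywhere and `1/r²` is integrable on
`[0,∞)` and on `(−∞,0]`. -/
theorem stmt_2 (f r r' r'' : ℝ → ℝ)
    (hf : Continuous f) (hfpos : ∀ u, 0 < f u)
    (hrd : ∀ u, HasDerivAt r (r' u) u)
    (hrd' : ∀ u, HasDerivAt r' (r'' u) u)
    (hODE : ∀ u, r'' u = f u * r u)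
    (h0 : r 0 = 1) (h0' : r' 0 = 0) :
    (∀ u, 0 < r u) ∧
    IntegrableOn (fun u => 1 / (r u)^2) (Set.Ici 0) volume ∧
    IntegrableOn (fun u => 1 / (r u)^2) (Set.Iic 0) volume :=
  stmt_2_general f r r' r'' hfpos hrd hrd' hODE h0 h0'
end

section
/- Let x : [0, Δ∞) → ℝⁿ be piecewise C¹ with Δ∞ < ∞ and infinite energy ∫₀^{Δ∞} |ẋ(s)|² ds = ∞. Then for every R > 0, the quantity A_Δ := ∫₀^Δ |ẋ(s)|² ds − R ∫₀^Δ |x(s)|² ds tends to +∞ as Δ → Δ∞. -/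
open MeasureTheory Filter

set_option maxHeartbeats 1000000

lemma cs_interval {f : ℝ → ℝ} {a t : ℝ} (hat : a ≤ t)
    (hf : IntervalIntegrable f volume a t)
    (hf2 : IntervalIntegrable (fun s => f s ^ 2) volume a t) :
    (∫ s in a..t, f s) ^ 2 ≤ (t - a) * ∫ s in a..t, f s ^ 2 := by
  rcases eq_or_lt_of_le hat with rfl | hlt
  · simp
  · have hLpos : (0:ℝ) < t - a := by linarith
    set F : ℝ := ∫ s in a..t, f s with hF
    set m : ℝ := F / (t - a) with hm
    have key : 0 ≤ ∫ s in a..t, (f s - m) ^ 2 :=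
      intervalIntegral.integral_nonneg hat (fun s _ => sq_nonneg _)
    have e1 : (fun s => (f s - m) ^ 2)
        = fun s => (f s ^ 2 - (2 * m) * f s) + m ^ 2 := by
      ext s; ring
    have h1 : IntervalIntegrable (fun s => f s ^ 2 - (2 * m) * f s) volume a t :=
      hf2.sub (hf.const_mul (2 * m))
    have e2 : ∫ s in a..t, (f s - m) ^ 2
        = (∫ s in a..t, (f s ^ 2 - (2 * m) * f s)) + (t - a) * m ^ 2 := by
      rw [e1, intervalIntegral.integral_add h1 intervalIntegrable_const,
        intervalIntegral.integral_const, smul_eq_mul]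
    have e3 : ∫ s in a..t, (f s ^ 2 - (2 * m) * f s)
        = (∫ s in a..t, f s ^ 2) - (2 * m) * F := by
      rw [intervalIntegral.integral_sub hf2 (hf.const_mul (2 * m)),
        intervalIntegral.integral_const_mul]
    rw [e2, e3] at key
    have hmL : m * (t - a) = F := div_mul_cancel₀ _ (ne_of_gt hLpos)
    nlinarith [key, hmL]

/-- If `x : [0,Δ∞) → ℝⁿ` is piecewise-C¹ (absolutely continuous)
with `Δ∞ < ∞` and diverging energy `∫₀^Δ |ẋ|² → ∞` as `Δ → Δ∞⁻`, then for
every `R > 0`, `A_Δ = ∫₀^Δ|ẋ|² − R∫₀^Δ|x|²` tends to `+∞` as `Δ → Δ∞⁻`. -/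
theorem stmt_6 (n : ℕ) (Δinf : ℝ) (hΔinf : 0 < Δinf) (R : ℝ) (hR : 0 < R)
    (x x' : ℝ → EuclideanSpace ℝ (Fin n))
    (hx : ∀ t ∈ Set.Ico (0:ℝ) Δinf, x t = x 0 + ∫ s in (0:ℝ)..t, x' s)
    (hx'int : ∀ Δ ∈ Set.Ico (0:ℝ) Δinf, IntervalIntegrable x' volume 0 Δ)
    (hx'sq : ∀ Δ ∈ Set.Ico (0:ℝ) Δinf,
      IntervalIntegrable (fun s => ‖x' s‖^2) volume 0 Δ)
    (hdiv : Tendsto (fun Δ => ∫ s in (0:ℝ)..Δ, ‖x' s‖^2)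
      (nhdsWithin Δinf (Set.Iio Δinf)) atTop) :
    Tendsto (fun Δ =>
        (∫ s in (0:ℝ)..Δ, ‖x' s‖^2) - R * ∫ s in (0:ℝ)..Δ, ‖x s‖^2)
      (nhdsWithin Δinf (Set.Iio Δinf)) atTop := by
  have hsR : 0 < Real.sqrt R := Real.sqrt_pos.mpr hR
  set δ : ℝ := min (Δinf/2) (1/(2*Real.sqrt R)) with hδdef
  have hδpos : 0 < δ := lt_min (by linarith) (by positivity)
  have hδle : δ ≤ Δinf/2 := min_le_left _ _
  have hδ2 : 2*R*δ^2 ≤ 1/2 := by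
    have h1 : δ ≤ 1/(2*Real.sqrt R) := min_le_right _ _
    have h2 : Real.sqrt R ^ 2 = R := Real.sq_sqrt hR.le
    have h3 : δ * (2*Real.sqrt R) ≤ 1 := by
      rw [← le_div_iff₀ (by positivity)]
      convert h1 using 1
    nlinarith [h3, h2, mul_nonneg hδpos.le hsR.le, hδpos.le, hsR.le]
  set a : ℝ := Δinf - δ with hadef
  have ha0 : 0 ≤ a := by rw [hadef]; linarith
  have haΔ : a < Δinf := by rw [hadef]; linarith
  have haI : a ∈ Set.Ico (0:ℝ) Δinf := ⟨ha0, haΔ⟩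
  -- continuity of x on initial segments
  have hxcont : ∀ Δ ∈ Set.Ico (0:ℝ) Δinf, ContinuousOn x (Set.Icc 0 Δ) := by
    intro Δ hΔ
    have hint := hx'int Δ hΔ
    have hc : ContinuousOn (fun t => x 0 + ∫ s in (0:ℝ)..t, x' s) (Set.Icc 0 Δ) := by
      apply ContinuousOn.add continuousOn_const
      have hprim := intervalIntegral.continuousOn_primitive_interval' hint
        (Set.left_mem_uIcc)
      rwa [Set.uIcc_of_le hΔ.1] at hprim
    refine ContinuousOn.congr hc ?_
    intro t ht
    exact hx t ⟨ht.1, lt_of_le_of_lt ht.2 hΔ.2⟩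
  have hxsq : ∀ Δ ∈ Set.Ico (0:ℝ) Δinf,
      IntervalIntegrable (fun s => ‖x s‖^2) volume 0 Δ := by
    intro Δ hΔ
    have hc : ContinuousOn (fun s => ‖x s‖^2) (Set.Icc 0 Δ) :=
      ((hxcont Δ hΔ).norm.pow 2)
    refine ContinuousOn.intervalIntegrable ?_
    rwa [Set.uIcc_of_le hΔ.1]
  set C0 : ℝ := ∫ s in (0:ℝ)..a, ‖x s‖^2 with hC0
  set K : ℝ := ‖x a‖^2 with hK
  have hKnn : 0 ≤ K := sq_nonneg _
  set C : ℝ := R*C0 + 2*R*δ*K with hCdef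
  -- the comparison function tends to atTop
  have hhalf : Tendsto (fun Δ => (1/2) * (∫ s in (0:ℝ)..Δ, ‖x' s‖^2) - C)
      (nhdsWithin Δinf (Set.Iio Δinf)) atTop := by
    have := (hdiv.const_mul_atTop (show (0:ℝ) < 1/2 by norm_num))
    simpa [sub_eq_add_neg] using tendsto_atTop_add_const_right _ (-C) this
  apply tendsto_atTop_mono' _ _ hhalf
  filter_upwards [Ioo_mem_nhdsLT_of_mem (Set.mem_Ioc.mpr ⟨haΔ, le_refl Δinf⟩)]
    with Δ hΔ
  obtain ⟨haΔ', hΔΔinf⟩ := hΔ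
  have hΔ0 : 0 ≤ Δ := le_of_lt (lt_of_le_of_lt ha0 haΔ')
  have hΔI : Δ ∈ Set.Ico (0:ℝ) Δinf := ⟨hΔ0, hΔΔinf⟩
  have haΔle : a ≤ Δ := haΔ'.le
  have hsub : Set.uIcc a Δ ⊆ Set.uIcc 0 Δ := by
    apply Set.uIcc_subset_uIcc <;> rw [Set.uIcc_of_le hΔ0] <;>
      exact ⟨by linarith, by linarith⟩
  have hx'aΔ : IntervalIntegrable x' volume a Δ := (hx'int Δ hΔI).mono_set hsub
  have hsq_aΔ : IntervalIntegrable (fun s => ‖x' s‖^2) volume a Δ :=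
    (hx'sq Δ hΔI).mono_set hsub
  have hxsq_aΔ : IntervalIntegrable (fun s => ‖x s‖^2) volume a Δ :=
    (hxsq Δ hΔI).mono_set hsub
  set E : ℝ := ∫ s in (0:ℝ)..Δ, ‖x' s‖^2 with hE
  set I : ℝ := ∫ s in a..Δ, ‖x' s‖^2 with hI
  have hEsplit : (∫ s in (0:ℝ)..a, ‖x' s‖^2) + I = E :=
    intervalIntegral.integral_add_adjacent_intervals (hx'sq a haI) hsq_aΔ
  have h0a_nn : 0 ≤ ∫ s in (0:ℝ)..a, ‖x' s‖^2 :=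
    intervalIntegral.integral_nonneg ha0 (fun s _ => sq_nonneg _)
  have hInn : 0 ≤ I :=
    intervalIntegral.integral_nonneg haΔle (fun s _ => sq_nonneg _)
  have hIE : I ≤ E := by linarith
  have hEnn : 0 ≤ E := by linarith
  -- pointwise bound on [a, Δ]
  have hpt : ∀ t ∈ Set.Icc a Δ, ‖x t‖^2 ≤ 2*K + 2*(δ*I) := by
    intro t ht
    have h0t : t ∈ Set.Ico (0:ℝ) Δinf :=
      ⟨le_trans ha0 ht.1, lt_of_le_of_lt ht.2 hΔΔinf⟩
    have hsub2 : Set.uIcc a t ⊆ Set.uIcc a Δ := by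
      apply Set.uIcc_subset_uIcc <;> rw [Set.uIcc_of_le haΔle] <;>
        exact ⟨by linarith [ht.1, ht.2], by linarith [ht.1, ht.2]⟩
    have hx'at : IntervalIntegrable x' volume a t := hx'aΔ.mono_set hsub2
    have hsq_at : IntervalIntegrable (fun s => ‖x' s‖^2) volume a t :=
      hsq_aΔ.mono_set hsub2
    have hxt : x t = x a + ∫ s in a..t, x' s := by
      rw [hx t h0t, hx a haI, add_assoc]
      congr 1
      exact (intervalIntegral.integral_add_adjacent_intervals
        (hx'int a haI) hx'at).symm
    have hB : ‖∫ s in a..t, x' s‖ ≤ ∫ s in a..t, ‖x' s‖ :=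
      intervalIntegral.norm_integral_le_integral_norm ht.1
    have hBnn : 0 ≤ ∫ s in a..t, ‖x' s‖ :=
      intervalIntegral.integral_nonneg ht.1 (fun s _ => norm_nonneg _)
    have hBsq : (∫ s in a..t, ‖x' s‖)^2 ≤ (t - a) * ∫ s in a..t, ‖x' s‖^2 :=
      cs_interval ht.1 hx'at.norm hsq_at
    have htail : ∫ s in a..t, ‖x' s‖^2 ≤ I := by
      have hsub3 : Set.uIcc t Δ ⊆ Set.uIcc a Δ := by
        apply Set.uIcc_subset_uIcc <;> rw [Set.uIcc_of_le haΔle] <;>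
          exact ⟨by linarith [ht.1, ht.2], by linarith [ht.1, ht.2]⟩
      have hadd := intervalIntegral.integral_add_adjacent_intervals hsq_at
        (hsq_aΔ.mono_set hsub3)
      have h2 : 0 ≤ ∫ s in t..Δ, ‖x' s‖^2 :=
        intervalIntegral.integral_nonneg ht.2 (fun s _ => sq_nonneg _)
      linarith [hadd, h2]
    have hta : t - a ≤ δ := by
      have : Δ < a + δ := by rw [hadef]; linarith
      linarith [ht.2]
    have hta0 : 0 ≤ t - a := by linarith [ht.1]
    have hat_nn : 0 ≤ ∫ s in a..t, ‖x' s‖^2 :=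
      intervalIntegral.integral_nonneg ht.1 (fun s _ => sq_nonneg _)
    have hBsq' : (∫ s in a..t, ‖x' s‖)^2 ≤ δ * I := by
      calc (∫ s in a..t, ‖x' s‖)^2 ≤ (t - a) * ∫ s in a..t, ‖x' s‖^2 := hBsq
        _ ≤ δ * I := mul_le_mul hta htail hat_nn hδpos.le
    have hnorm : ‖x t‖ ≤ ‖x a‖ + ∫ s in a..t, ‖x' s‖ := by
      rw [hxt]
      exact le_trans (norm_add_le _ _) (by linarith [hB])
    have hAnn : 0 ≤ ‖x a‖ := norm_nonneg _
    have hxtnn : 0 ≤ ‖x t‖ := norm_nonneg _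
    rw [hK]
    nlinarith [sq_nonneg (‖x a‖ - ∫ s in a..t, ‖x' s‖), hnorm, hBsq', hBnn,
      hAnn, hxtnn]
  have hS : ∫ s in a..Δ, ‖x s‖^2 ≤ (Δ - a) * (2*K + 2*(δ*I)) := by
    have hmono := intervalIntegral.integral_mono_on haΔle hxsq_aΔ
      intervalIntegrable_const hpt
    rwa [intervalIntegral.integral_const, smul_eq_mul] at hmono
  have hΔa : Δ - a ≤ δ := by rw [hadef]; linarith
  have hΔa0 : 0 ≤ Δ - a := by linarith
  have hxsplit : C0 + (∫ s in a..Δ, ‖x s‖^2) = ∫ s in (0:ℝ)..Δ, ‖x s‖^2 :=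
    intervalIntegral.integral_add_adjacent_intervals (hxsq a haI) hxsq_aΔ
  have hSnn_bound : (Δ - a) * (2*K + 2*(δ*I)) ≤ δ * (2*K + 2*(δ*E)) := by
    have h1 : 2*K + 2*(δ*I) ≤ 2*K + 2*(δ*E) := by nlinarith [hδpos.le]
    have h2 : 0 ≤ 2*K + 2*(δ*I) := by positivity
    nlinarith [hδpos.le]
  show (1/2) * E - C ≤ E - R * ∫ s in (0:ℝ)..Δ, ‖x s‖^2
  rw [← hxsplit, hCdef]
  have hRS : R * (∫ s in a..Δ, ‖x s‖^2) ≤ 2*R*δ*K + (1/2)*E := by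
    have : R * (∫ s in a..Δ, ‖x s‖^2) ≤ R * (δ * (2*K + 2*(δ*E))) := by
      apply mul_le_mul_of_nonneg_left (le_trans hS hSnn_bound) hR.le
    nlinarith [hδ2, hEnn, hR.le, hδpos.le, hKnn]
  nlinarith [hRS]
end

section
/- Let x : [0, Δ∞) → ℝⁿ be piecewise C¹ with Δ∞ < ∞ and ∫₀^{Δ∞} |ẋ(s)|² ds = ∞. Then for every R > 0 and K > 0, A_Δ − K|x(Δ)|² → +∞ as Δ → Δ∞, where A_Δ = ∫₀^Δ |ẋ|² − R∫₀^Δ |x|². -/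
/-!
Write `E(Δ) = ∫₀^Δ |ẋ|²` and fix `a = Δ∞ - ε`. For `a ≤ t ≤ Δ < Δ∞`, Cauchy–Schwarz gives
`|x(t) - x(a)|² ≤ ε E(Δ)`, hence `|x(t)|² ≤ 2|x(a)|² + 2ε E(Δ)`. Integrating over `[a, Δ]`,
`R ∫₀^Δ |x|² + K |x(Δ)|² ≤ 2ε(Rε + K) E(Δ) + C`, and for `ε` small the coefficient is at most
`1/2`, so `A_Δ - K |x(Δ)|² ≥ E(Δ)/2 - C → ∞`.
-/

open MeasureTheory Filter Set Topology

lemma sq_intervalIntegral_le {f : ℝ → ℝ} {a b : ℝ} (hab : a ≤ b)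
    (hf : IntervalIntegrable f volume a b)
    (hf2 : IntervalIntegrable (fun s => f s ^ 2) volume a b) :
    (∫ s in a..b, f s) ^ 2 ≤ (b - a) * ∫ s in a..b, f s ^ 2 := by
  have hquad : ∀ c : ℝ,
      0 ≤ (b - a) * (c * c) + (-2 * ∫ s in a..b, f s) * c + ∫ s in a..b, f s ^ 2 := by
    intro c
    have hexp : ∫ s in a..b, (f s - c) ^ 2
        = (b - a) * (c * c) + (-2 * ∫ s in a..b, f s) * c + ∫ s in a..b, f s ^ 2 := by
      simp_rw [sub_sq]
      have hlin := (hf.const_mul 2).mul_const c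
      rw [intervalIntegral.integral_add (hf2.sub hlin) intervalIntegrable_const,
        intervalIntegral.integral_sub hf2 hlin, intervalIntegral.integral_const,
        intervalIntegral.integral_mul_const, intervalIntegral.integral_const_mul, smul_eq_mul]
      ring
    exact hexp ▸ intervalIntegral.integral_nonneg hab fun s _ => sq_nonneg _
  have := discrim_le_zero hquad
  rw [discrim] at this
  linarith

lemma sq_norm_intervalIntegral_le {E : Type*} [NormedAddCommGroup E] [NormedSpace ℝ E]
    {f : ℝ → E} {a b : ℝ} (hab : a ≤ b) (hf : IntervalIntegrable f volume a b)
    (hf2 : IntervalIntegrable (fun s => ‖f s‖ ^ 2) volume a b) :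
    ‖∫ s in a..b, f s‖ ^ 2 ≤ (b - a) * ∫ s in a..b, ‖f s‖ ^ 2 :=
  (pow_le_pow_left₀ (norm_nonneg _) (intervalIntegral.norm_integral_le_integral_norm hab) 2).trans
    (sq_intervalIntegral_le hab hf.norm hf2)

lemma tendsto_atTop_sub_of_le_half_add_const {α : Type*} {l : Filter α} {e g : α → ℝ}
    (he : Tendsto e l atTop) (C : ℝ) (hg : ∀ᶠ a in l, g a ≤ e a / 2 + C) :
    Tendsto (fun a => e a - g a) l atTop := by
  refine tendsto_atTop_mono' l ?_
    (tendsto_atTop_add_const_right l (-C) (he.atTop_div_const two_pos))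
  filter_upwards [hg] with a ha
  linarith

section PrimitiveOnIco

variable {E : Type*} [NormedAddCommGroup E] [NormedSpace ℝ E] {T : ℝ} {x x' : ℝ → E}
  (hx : ∀ t ∈ Ico (0 : ℝ) T, x t = x 0 + ∫ s in (0 : ℝ)..t, x' s)
  (hx'int : ∀ t ∈ Ico (0 : ℝ) T, IntervalIntegrable x' volume 0 t)
include hx hx'int

lemma sub_eq_intervalIntegral_of_eq_primitive {a t : ℝ} (ha : 0 ≤ a) (hat : a ≤ t)
    (ht : t < T) : x t - x a = ∫ s in a..t, x' s := by
  rw [hx t ⟨ha.trans hat, ht⟩, hx a ⟨ha, hat.trans_lt ht⟩, add_sub_add_left_eq_sub,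
    intervalIntegral.integral_interval_sub_left (hx'int t ⟨ha.trans hat, ht⟩)
      (hx'int a ⟨ha, hat.trans_lt ht⟩)]

lemma continuousOn_Icc_of_eq_primitive {Δ : ℝ} (hΔ0 : 0 ≤ Δ) (hΔ : Δ < T) :
    ContinuousOn x (Icc 0 Δ) := by
  have hprim := intervalIntegral.continuousOn_primitive_interval' (hx'int Δ ⟨hΔ0, hΔ⟩)
    left_mem_uIcc
  rw [uIcc_of_le hΔ0] at hprim
  exact (continuousOn_const.add hprim).congr fun t ht => hx t ⟨ht.1, ht.2.trans_lt hΔ⟩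

lemma intervalIntegrable_sq_norm_of_eq_primitive {Δ : ℝ} (hΔ0 : 0 ≤ Δ) (hΔ : Δ < T) :
    IntervalIntegrable (fun s => ‖x s‖ ^ 2) volume 0 Δ :=
  (((continuousOn_Icc_of_eq_primitive hx hx'int hΔ0 hΔ).norm.pow 2).intervalIntegrable_of_Icc
    hΔ0)

variable (hx'sq : ∀ t ∈ Ico (0 : ℝ) T, IntervalIntegrable (fun s => ‖x' s‖ ^ 2) volume 0 t)
include hx'sq

lemma sq_norm_le_of_eq_primitive {a t Δ : ℝ} (ha : 0 ≤ a) (hat : a ≤ t) (htΔ : t ≤ Δ)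
    (hΔ : Δ < T) :
    ‖x t‖ ^ 2 ≤ 2 * ‖x a‖ ^ 2 + 2 * ((Δ - a) * ∫ s in (0 : ℝ)..Δ, ‖x' s‖ ^ 2) := by
  have hsub : uIcc a t ⊆ uIcc 0 Δ := by
    rw [uIcc_of_le hat, uIcc_of_le (ha.trans (hat.trans htΔ))]
    exact Icc_subset_Icc ha htΔ
  have hmem : Δ ∈ Ico (0 : ℝ) T := ⟨ha.trans (hat.trans htΔ), hΔ⟩
  have hincr : ‖x t - x a‖ ^ 2 ≤ (Δ - a) * ∫ s in (0 : ℝ)..Δ, ‖x' s‖ ^ 2 := by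
    rw [sub_eq_intervalIntegral_of_eq_primitive hx hx'int ha hat (htΔ.trans_lt hΔ)]
    refine (sq_norm_intervalIntegral_le hat ((hx'int Δ hmem).mono_set hsub)
      ((hx'sq Δ hmem).mono_set hsub)).trans (mul_le_mul (by linarith) ?_
      (intervalIntegral.integral_nonneg hat fun s _ => sq_nonneg _) (by linarith))
    exact intervalIntegral.integral_mono_interval ha hat htΔ
      (Eventually.of_forall fun s => sq_nonneg _) (hx'sq Δ hmem)
  have htri : ‖x t‖ ≤ ‖x a‖ + ‖x t - x a‖ := norm_le_insert' (x t) (x a)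
  nlinarith [norm_nonneg (x t), norm_nonneg (x t - x a), sq_nonneg (‖x a‖ - ‖x t - x a‖)]

lemma integral_sq_norm_le_of_eq_primitive {a Δ : ℝ} (ha : 0 ≤ a) (haΔ : a ≤ Δ) (hΔ : Δ < T) :
    ∫ s in (0 : ℝ)..Δ, ‖x s‖ ^ 2 ≤ (∫ s in (0 : ℝ)..a, ‖x s‖ ^ 2) +
      (Δ - a) * (2 * ‖x a‖ ^ 2 + 2 * ((Δ - a) * ∫ s in (0 : ℝ)..Δ, ‖x' s‖ ^ 2)) := by
  have htail : IntervalIntegrable (fun s => ‖x s‖ ^ 2) volume a Δ := by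
    refine (intervalIntegrable_sq_norm_of_eq_primitive hx hx'int (ha.trans haΔ) hΔ).mono_set ?_
    rw [uIcc_of_le haΔ, uIcc_of_le (ha.trans haΔ)]
    exact Icc_subset_Icc ha le_rfl
  rw [← intervalIntegral.integral_add_adjacent_intervals
    (intervalIntegrable_sq_norm_of_eq_primitive hx hx'int ha (haΔ.trans_lt hΔ)) htail]
  gcongr
  refine (intervalIntegral.integral_mono_on haΔ htail intervalIntegrable_const fun t ht =>
    sq_norm_le_of_eq_primitive hx hx'int hx'sq ha ht.1 ht.2 hΔ).trans_eq ?_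
  rw [intervalIntegral.integral_const, smul_eq_mul]

lemma exists_eventually_le_half_energy_add_const (hT : 0 < T) {R K : ℝ} (hR : 0 ≤ R)
    (hK : 0 ≤ K) : ∃ C, ∀ᶠ Δ in 𝓝[<] T,
      R * (∫ s in (0 : ℝ)..Δ, ‖x s‖ ^ 2) + K * ‖x Δ‖ ^ 2
        ≤ (∫ s in (0 : ℝ)..Δ, ‖x' s‖ ^ 2) / 2 + C := by
  set ε := min T (1 / (4 * (R * T + K + 1)))
  have hε : 0 < ε := lt_min hT (by positivity)
  have hεT : ε ≤ T := min_le_left _ _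
  have hcoef : 4 * ε * (R * ε + K) ≤ 1 := by
    have h : ε * (4 * (R * T + K + 1)) ≤ 1 := (le_div_iff₀ (by positivity)).1 (min_le_right _ _)
    nlinarith [mul_le_mul_of_nonneg_left hεT (mul_nonneg hR hε.le)]
  set a := T - ε
  refine ⟨R * (∫ s in (0 : ℝ)..a, ‖x s‖ ^ 2) + (R * ε + K) * (2 * ‖x a‖ ^ 2), ?_⟩
  filter_upwards [Ioo_mem_nhdsLT (show a < T by linarith)] with Δ ⟨haΔ, hΔ⟩
  have ha : 0 ≤ a := by linarith
  have hint := integral_sq_norm_le_of_eq_primitive hx hx'int hx'sq ha haΔ.le hΔ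
  have hend := sq_norm_le_of_eq_primitive hx hx'int hx'sq ha haΔ.le le_rfl hΔ
  have henergy : 0 ≤ ∫ s in (0 : ℝ)..Δ, ‖x' s‖ ^ 2 :=
    intervalIntegral.integral_nonneg (ha.trans haΔ.le) fun s _ => sq_nonneg _
  have hd : Δ - a ≤ ε := by linarith
  have hd0 : 0 ≤ Δ - a := by linarith
  have hslope : (Δ - a) * (R * (Δ - a) + K) ≤ ε * (R * ε + K) := by gcongr
  have hconst : R * (Δ - a) * (2 * ‖x a‖ ^ 2) ≤ R * ε * (2 * ‖x a‖ ^ 2) := by gcongr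
  nlinarith [mul_le_mul_of_nonneg_left hint hR, mul_le_mul_of_nonneg_left hend hK,
    mul_le_mul_of_nonneg_right hslope henergy]

end PrimitiveOnIco

/-- With `x` as in Statement 6 (finite interval, infinite energy),
for every `R > 0` and `K > 0`, `A_Δ − K|x(Δ)|²` tends to `+∞` as `Δ → Δ∞⁻`,
where `A_Δ = ∫₀^Δ|ẋ|² − R∫₀^Δ|x|²`. -/
theorem stmt_7 (n : ℕ) (Δinf : ℝ) (hΔinf : 0 < Δinf)
    (R K : ℝ) (hR : 0 < R) (hK : 0 < K)
    (x x' : ℝ → EuclideanSpace ℝ (Fin n))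
    (hx : ∀ t ∈ Set.Ico (0:ℝ) Δinf, x t = x 0 + ∫ s in (0:ℝ)..t, x' s)
    (hx'int : ∀ Δ ∈ Set.Ico (0:ℝ) Δinf, IntervalIntegrable x' volume 0 Δ)
    (hx'sq : ∀ Δ ∈ Set.Ico (0:ℝ) Δinf,
      IntervalIntegrable (fun s => ‖x' s‖^2) volume 0 Δ)
    (hdiv : Tendsto (fun Δ => ∫ s in (0:ℝ)..Δ, ‖x' s‖^2)
      (nhdsWithin Δinf (Set.Iio Δinf)) atTop) :
    Tendsto (fun Δ =>
        (∫ s in (0:ℝ)..Δ, ‖x' s‖^2) - R * (∫ s in (0:ℝ)..Δ, ‖x s‖^2)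
          - K * ‖x Δ‖^2)
      (nhdsWithin Δinf (Set.Iio Δinf)) atTop := by
  obtain ⟨C, hC⟩ :=
    exists_eventually_le_half_energy_add_const hx hx'int hx'sq hΔinf hR.le hK.le
  exact (tendsto_atTop_sub_of_le_half_add_const hdiv C hC).congr fun Δ => (sub_sub _ _ _).symm
end

section
/- Let F : ℝⁿ × ℝ → ℝ be superquadratic: there exist ε, R₁ > 0, R₀ ∈ ℝ and a sequence pₘ ∈ ℝⁿ with |pₘ| → ∞ such that F(pₘ, u) ≥ R₁|pₘ|^{2+ε} + R₀ for all u. Assume also −F is at most quadratic: F(x,u) ≥ −(R̃₁|x|² + R̃₀) for all x, u, for some constants R̃₁, R̃₀ > 0. Fix u₀ ∈ ℝ, Δu > 0 and 0 < δ < Δu/2. Define loops xₘ : [0,Δu] → ℝⁿ going linearly from 0 to pₘ on [0,δ], staying at pₘ on [δ, Δu−δ], and returning linearly on [Δu−δ, Δu]. Then J(xₘ) := (1/2)∫₀^{Δu}(|ẋₘ(s)|² − F(xₘ(s), u₀+s)) ds → −∞ as m → ∞. -/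
open MeasureTheory Filter

set_option maxHeartbeats 2000000

/-- Lemma 5.1 of the paper: If `F` is superquadratic along a
sequence `pₘ` with `|pₘ| → ∞`, and `−F` is at most quadratic, then the values
of the Lagrangian functional on the loops `xₘ` (going linearly from `0` to
`pₘ` on `[0,δ]`, staying at `pₘ` on `[δ,Δu−δ]`, returning linearly on
`[Δu−δ,Δu]`) diverge to `−∞`. -/
theorem stmt_15 (n : ℕ) (F : EuclideanSpace ℝ (Fin n) → ℝ → ℝ)
    (hFc : Continuous (Function.uncurry F))
    (ε R₁ R₀ : ℝ) (hε : 0 < ε) (hR₁ : 0 < R₁)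
    (p : ℕ → EuclideanSpace ℝ (Fin n))
    (hpdiv : Tendsto (fun m => ‖p m‖) atTop atTop)
    (hsuper : ∀ m, ∀ u : ℝ, R₁ * ‖p m‖ ^ ((2:ℝ) + ε) + R₀ ≤ F (p m) u)
    (Rt₁ Rt₀ : ℝ) (hRt₁ : 0 < Rt₁) (hRt₀ : 0 < Rt₀)
    (hquad : ∀ x u, -(Rt₁ * ‖x‖^2 + Rt₀) ≤ F x u)
    (u₀ Δu δ : ℝ) (hΔu : 0 < Δu) (hδ : 0 < δ) (hδ' : δ < Δu / 2) :
    Tendsto (fun m : ℕ =>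
        (1/2) * ∫ s in (0:ℝ)..Δu,
          (‖(if s < δ then (1/δ) • p m
              else if s < Δu - δ then (0 : EuclideanSpace ℝ (Fin n))
              else (-(1/δ)) • p m)‖^2
            - F (if s ≤ δ then (s/δ) • p m
                  else if s ≤ Δu - δ then p m
                  else ((Δu - s)/δ) • p m) (u₀ + s)))
      atTop atBot := by
  have h2δ : 2 * δ < Δu := by linarith
  have hδΔ : δ < Δu - δ := by linarith
  set B : ℝ → ℝ := fun t => (1/2) * (2 * δ * (t^2/δ^2 + Rt₁ * t^2 + Rt₀)
      + (Δu - 2*δ) * (-(R₁ * t ^ ((2:ℝ) + ε) + R₀))) with hBdef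
  -- B tends to -∞
  have hBtend : Tendsto B atTop atBot := by
    have hc : (0:ℝ) < (1/2) * (Δu - 2*δ) * R₁ :=
      mul_pos (mul_pos (by norm_num) (by linarith)) hR₁
    have hg : Tendsto (fun t : ℝ => (1/δ + δ * Rt₁) * t ^ (-ε) - (1/2) * (Δu - 2*δ) * R₁)
        atTop (nhds (-((1/2) * (Δu - 2*δ) * R₁))) := by
      have := ((tendsto_rpow_neg_atTop hε).const_mul (1/δ + δ * Rt₁)).sub_const
        ((1/2) * (Δu - 2*δ) * R₁)
      simpa using this
    have hmain : Tendsto (fun t : ℝ => t ^ ((2:ℝ) + ε) *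
        ((1/δ + δ * Rt₁) * t ^ (-ε) - (1/2) * (Δu - 2*δ) * R₁)
        + (δ * Rt₀ - (1/2) * (Δu - 2*δ) * R₀)) atTop atBot := by
      apply tendsto_atBot_add_const_right
      exact (tendsto_rpow_atTop (by linarith : (0:ℝ) < 2 + ε)).atTop_mul_neg
        (by linarith) hg
    apply hmain.congr'
    filter_upwards [eventually_ge_atTop (1:ℝ)] with t ht
    have ht0 : (0:ℝ) < t := by linarith
    have hre : t ^ ((2:ℝ) + ε) = t^2 * t^ε := by
      rw [Real.rpow_add ht0]
      norm_num [Real.rpow_natCast]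
    have hrn : t ^ (-ε) = (t^ε)⁻¹ := Real.rpow_neg ht0.le ε
    have htε : (0:ℝ) < t^ε := Real.rpow_pos_of_pos ht0 ε
    rw [hBdef]
    simp only [hre, hrn]
    field_simp
    ring
  have hcomp : Tendsto (fun m => B ‖p m‖) atTop atBot := hBtend.comp hpdiv
  refine tendsto_atBot_mono (fun m => ?_) hcomp
  -- per-m bound
  beta_reduce
  set q := p m with hq
  set N := ‖q‖ with hN
  have hN0 : 0 ≤ N := norm_nonneg _
  set f : ℝ → ℝ := fun s =>
      ‖(if s < δ then (1/δ) • q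
          else if s < Δu - δ then (0 : EuclideanSpace ℝ (Fin n))
          else (-(1/δ)) • q)‖^2
        - F (if s ≤ δ then (s/δ) • q
              else if s ≤ Δu - δ then q
              else ((Δu - s)/δ) • q) (u₀ + s) with hfdef
  -- continuous comparison functions
  set g₁ : ℝ → ℝ := fun s => ‖(1/δ) • q‖^2 - F ((s/δ) • q) (u₀ + s) with hg₁
  set g₂ : ℝ → ℝ := fun s => - F q (u₀ + s) with hg₂
  set g₃ : ℝ → ℝ := fun s => ‖(-(1/δ)) • q‖^2 - F (((Δu - s)/δ) • q) (u₀ + s) with hg₃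
  have hFcont : ∀ (c : ℝ → EuclideanSpace ℝ (Fin n)), Continuous c →
      Continuous (fun s : ℝ => F (c s) (u₀ + s)) := by
    intro c hc
    exact hFc.comp (hc.prodMk (continuous_const.add continuous_id))
  have hc₁ : Continuous g₁ :=
    continuous_const.sub (hFcont _ ((continuous_id.div_const δ).smul continuous_const))
  have hc₂ : Continuous g₂ :=
    (hFcont _ continuous_const).neg
  have hc₃ : Continuous g₃ :=
    continuous_const.sub (hFcont _
      (((continuous_const.sub continuous_id).div_const δ).smul continuous_const))
  -- a.e. avoidance of single points
  have hane : ∀ c : ℝ, ∀ᵐ s : ℝ, s ≠ c := by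
    intro c
    rw [ae_iff]
    have : {s : ℝ | ¬ s ≠ c} = {c} := by ext x; simp
    rw [this]
    exact measure_singleton c
  -- equality of f with gᵢ on the open pieces
  have heq₁ : ∀ᵐ s : ℝ, s ∈ Set.uIoc (0:ℝ) δ → f s = g₁ s := by
    filter_upwards [hane δ] with s hne hs
    rw [Set.uIoc_of_le hδ.le] at hs
    have hlt : s < δ := lt_of_le_of_ne hs.2 hne
    simp only [hfdef, hg₁, if_pos hlt, if_pos hs.2]
  have heq₂ : ∀ᵐ s : ℝ, s ∈ Set.uIoc δ (Δu - δ) → f s = g₂ s := by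
    filter_upwards [hane (Δu - δ)] with s hne hs
    rw [Set.uIoc_of_le hδΔ.le] at hs
    have h1 : ¬ s < δ := not_lt.mpr hs.1.le
    have h2 : s < Δu - δ := lt_of_le_of_ne hs.2 hne
    have h3 : ¬ s ≤ δ := not_le.mpr hs.1
    simp only [hfdef, hg₂, if_neg h1, if_pos h2, if_neg h3, if_pos hs.2,
      norm_zero, ne_eq, OfNat.ofNat_ne_zero, not_false_eq_true, zero_pow, zero_sub]
  have heq₃ : ∀ᵐ s : ℝ, s ∈ Set.uIoc (Δu - δ) Δu → f s = g₃ s := by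
    filter_upwards [] with s hs
    rw [Set.uIoc_of_le (by linarith)] at hs
    have h1 : ¬ s < δ := not_lt.mpr (by linarith [hs.1])
    have h2 : ¬ s < Δu - δ := not_lt.mpr hs.1.le
    have h3 : ¬ s ≤ δ := not_le.mpr (by linarith [hs.1])
    have h4 : ¬ s ≤ Δu - δ := not_le.mpr hs.1
    simp only [hfdef, hg₃, if_neg h1, if_neg h2, if_neg h3, if_neg h4]
  -- interval integrability of f on the pieces
  have hint : ∀ (a b : ℝ), a ≤ b → ∀ (g : ℝ → ℝ), Continuous g →
      (∀ᵐ s : ℝ, s ∈ Set.uIoc a b → f s = g s) → IntervalIntegrable f volume a b := by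
    intro a b hab g hg heq
    rw [intervalIntegrable_iff_integrableOn_Ioc_of_le hab]
    have hgi : IntegrableOn g (Set.Ioc a b) volume :=
      (intervalIntegrable_iff_integrableOn_Ioc_of_le hab).mp (hg.intervalIntegrable a b)
    apply hgi.congr
    have hmem : ∀ᵐ s : ℝ ∂(volume.restrict (Set.Ioc a b)), s ∈ Set.Ioc a b :=
      ae_restrict_mem measurableSet_Ioc
    filter_upwards [hmem, ae_restrict_of_ae heq] with s hs h2
    exact (h2 (by rwa [Set.uIoc_of_le hab])).symm
  have hint₁ : IntervalIntegrable f volume 0 δ := hint 0 δ hδ.le g₁ hc₁ heq₁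
  have hint₂ : IntervalIntegrable f volume δ (Δu - δ) := hint δ (Δu - δ) hδΔ.le g₂ hc₂ heq₂
  have hint₃ : IntervalIntegrable f volume (Δu - δ) Δu :=
    hint (Δu - δ) Δu (by linarith) g₃ hc₃ heq₃
  -- split the integral
  have hsplit : ∫ s in (0:ℝ)..Δu, f s
      = (∫ s in (0:ℝ)..δ, f s) + (∫ s in δ..(Δu - δ), f s) + (∫ s in (Δu - δ)..Δu, f s) := by
    rw [intervalIntegral.integral_add_adjacent_intervals hint₁ hint₂,
      intervalIntegral.integral_add_adjacent_intervals (hint₁.trans hint₂) hint₃]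
  -- norms
  have hnorm1 : ‖(1/δ) • q‖^2 = N^2/δ^2 := by
    rw [norm_smul, Real.norm_eq_abs, abs_of_pos (by positivity : (0:ℝ) < 1/δ)]
    rw [hN]
    field_simp
  have hnorm3 : ‖(-(1/δ)) • q‖^2 = N^2/δ^2 := by
    rw [norm_smul, Real.norm_eq_abs, abs_neg, abs_of_pos (by positivity : (0:ℝ) < 1/δ)]
    rw [hN]
    field_simp
  set C₁ : ℝ := N^2/δ^2 + (Rt₁ * N^2 + Rt₀) with hC₁
  set D : ℝ := -(R₁ * N ^ ((2:ℝ) + ε) + R₀) with hD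
  have hFb : ∀ (t : ℝ) (x : EuclideanSpace ℝ (Fin n)), ‖x‖ ≤ N →
      - F x t ≤ Rt₁ * N^2 + Rt₀ := by
    intro t x hx
    have := hquad x t
    have hsq : ‖x‖^2 ≤ N^2 := by nlinarith [norm_nonneg x]
    nlinarith
  -- bounds on the pieces
  have hb₁ : ∫ s in (0:ℝ)..δ, f s ≤ δ * C₁ := by
    rw [intervalIntegral.integral_congr_ae heq₁]
    calc ∫ s in (0:ℝ)..δ, g₁ s ≤ ∫ _ in (0:ℝ)..δ, C₁ := by
          apply intervalIntegral.integral_mono_on hδ.le (hc₁.intervalIntegrable 0 δ)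
            intervalIntegrable_const
          intro s hs
          rw [hg₁]
          have hxn : ‖(s/δ) • q‖ ≤ N := by
            rw [norm_smul, Real.norm_eq_abs, abs_of_nonneg (div_nonneg hs.1 hδ.le)]
            have : s/δ ≤ 1 := by
              rw [div_le_one hδ]; exact hs.2
            nlinarith [norm_nonneg q]
          have := hFb (u₀ + s) _ hxn
          rw [hnorm1, hC₁]
          linarith
      _ = δ * C₁ := by
          rw [intervalIntegral.integral_const, smul_eq_mul, sub_zero]
  have hb₂ : ∫ s in δ..(Δu - δ), f s ≤ (Δu - 2*δ) * D := by
    rw [intervalIntegral.integral_congr_ae heq₂]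
    calc ∫ s in δ..(Δu - δ), g₂ s ≤ ∫ _ in δ..(Δu - δ), D := by
          apply intervalIntegral.integral_mono_on hδΔ.le (hc₂.intervalIntegrable _ _)
            intervalIntegrable_const
          intro s _
          simp only [hg₂, hD]
          have := hsuper m (u₀ + s)
          rw [← hq, ← hN] at this
          linarith
      _ = (Δu - 2*δ) * D := by
          rw [intervalIntegral.integral_const, smul_eq_mul]
          ring
  have hb₃ : ∫ s in (Δu - δ)..Δu, f s ≤ δ * C₁ := by
    rw [intervalIntegral.integral_congr_ae heq₃]
    calc ∫ s in (Δu - δ)..Δu, g₃ s ≤ ∫ _ in (Δu - δ)..Δu, C₁ := by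
          apply intervalIntegral.integral_mono_on (by linarith) (hc₃.intervalIntegrable _ _)
            intervalIntegrable_const
          intro s hs
          rw [hg₃]
          have hxn : ‖((Δu - s)/δ) • q‖ ≤ N := by
            rw [norm_smul, Real.norm_eq_abs,
              abs_of_nonneg (by
                apply div_nonneg _ hδ.le
                linarith [hs.2] : (0:ℝ) ≤ (Δu - s)/δ)]
            have : (Δu - s)/δ ≤ 1 := by
              rw [div_le_one hδ]; linarith [hs.1]
            nlinarith [norm_nonneg q]
          have := hFb (u₀ + s) _ hxn
          rw [hnorm3, hC₁]
          linarith
      _ = δ * C₁ := by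
          rw [intervalIntegral.integral_const, smul_eq_mul]
          ring
  -- conclude
  have hItot : ∫ s in (0:ℝ)..Δu, f s ≤ 2 * δ * C₁ + (Δu - 2*δ) * D := by
    rw [hsplit]; linarith
  have hBval : B N = (1/2) * (2 * δ * C₁ + (Δu - 2*δ) * D) := by
    simp only [hBdef, hC₁, hD]
    ring
  rw [hBval]
  exact mul_le_mul_of_nonneg_left hItot (by norm_num)
end
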